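/- Assume as given: (i) a lower bound on the partition function, ln Z_n ≥ −L (ln n) n^{a(d−1)/d} for all large n and some constant L > 0; (ii) subcritical exponential decay, P_{p_c − ε}(|C_max(Λ(n))| ≥ (−ln(p_c − ε)) n^a) ≤ e^{−L' n^a} for all large n and some L' > 0, where 0 < ε < p_c. Then for the measure μ_n(ω) = P_{p_n(ω)}(ω)/Z_n with p_n(ω) = exp(−|C_max(ω)|/n^a), one has limsup_{n→∞} (1/n^a) ln μ_n(p_n ≤ p_c − ε) < 0. -/

import Mathlib

/-!
Split the numerator `∑_{p_n(ω) ≤ p_c-ε} P_{p_n(ω)}(ω)` of `μ_n(p_n ≤ p_c-ε)` according to the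
value `b` of `|C_max|`. The term of `b` is `P_{φ_n(b)}(|C_max| = b)` with `φ_n(b) ≤ p_c-ε`, so, the
event `{|C_max| ≥ b_n⁻}` being increasing, it is at most `P_{p_c-ε}(|C_max| ≥ b_n⁻) ≤ e^{-L' n^a}`.
There are only polynomially many values of `b`, and `ln Z_n ≥ -o(n^a)` by (i).

The logarithm and the `limsup` of a real sequence are only meaningful here if the numerator is
positive and not much smaller (a sequence unbounded below has the junk `limsup` `0`). Take a sub-box
`Λ(ℓ)` with `|Λ(ℓ)| ≍ n^a`. When `Λ(ℓ)` is an isolated open cluster and no cluster away from it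
reaches `b_n⁻`, `|C_max| = |Λ(ℓ)|`. The first condition fixes `O(n^a)` edges; the second only
involves the other edges and has probability `≥ 1/2` by (ii). Hence the numerator is at least
`e^{-K n^a}/2`, while `Z_n ≤ |Λ(n)| + 1`.
-/

open Filter

/-- The box `Λ(n) = [-n/2, n/2)^d ∩ ℤ^d`. -/
noncomputable def box (d n : ℕ) : Finset (Fin d → ℤ) :=
  Fintype.piFinset fun _ => Finset.Icc (-(n : ℤ) / 2) (((n : ℤ) - 1) / 2)

/-- The set `E_n` of nearest-neighbour edges with both endpoints in `Λ(n)`. -/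
noncomputable def boxEdges (d n : ℕ) : Finset (Sym2 (Fin d → ℤ)) :=
  (((box d n) ×ˢ (box d n)).filter fun p => (∑ i, |p.1 i - p.2 i|) = 1).image (fun p => Sym2.mk p.1 p.2)

/-- Percolation configurations on the edges of the box. -/
abbrev Cfg (d n : ℕ) := {e // e ∈ boxEdges d n} → Bool

/-- The open subgraph determined by a configuration on the edges of the box. -/
def openBoxGraph (d n : ℕ) (ω : Cfg d n) : SimpleGraph (Fin d → ℤ) :=
  SimpleGraph.fromEdgeSet {e | ∃ h : e ∈ boxEdges d n, ω ⟨e, h⟩ = true}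

/-- The open cluster of `x` inside the box. -/
def boxCluster (d n : ℕ) (ω : Cfg d n) (x : Fin d → ℤ) : Set (Fin d → ℤ) :=
  {y | (openBoxGraph d n ω).Reachable x y}

/-- `|C_max(ω)|`, the size of a largest open cluster in the box. -/
noncomputable def cmaxB (d n : ℕ) (ω : Cfg d n) : ℕ :=
  (box d n).sup fun x => (boxCluster d n ω x).ncard

/-- The automatic control `p_n(ω) = exp(-|C_max(ω)|/n^a)`. -/
noncomputable def pn (d n : ℕ) (a : ℝ) (ω : Cfg d n) : ℝ :=
  Real.exp (-(cmaxB d n ω : ℝ) / (n : ℝ) ^ a)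

/-- The Bernoulli(p) weight of a configuration on `E_n`. -/
noncomputable def Pcfg (d n : ℕ) (p : ℝ) (ω : Cfg d n) : ℝ :=
  ∏ e : {e // e ∈ boxEdges d n}, (if ω e then p else 1 - p)

/-- `P_q(S)`: Bernoulli(q) probability of an event `S` in the box. -/
noncomputable def PrEvent (d n : ℕ) (q : ℝ) (S : Set (Cfg d n)) : ℝ :=
  ∑ ω : Cfg d n, S.indicator (Pcfg d n q) ω

/-- The partition function `Z_n = Σ_ω P_{p_n(ω)}(ω)`. -/
noncomputable def Zn (d n : ℕ) (a : ℝ) : ℝ :=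
  ∑ ω : Cfg d n, Pcfg d n (pn d n a ω) ω

/-- The self-critical measure `μ_n(S) = (1/Z_n) Σ_{ω ∈ S} P_{p_n(ω)}(ω)`. -/
noncomputable def muEvent (d n : ℕ) (a : ℝ) (S : Set (Cfg d n)) : ℝ :=
  (∑ ω : Cfg d n, S.indicator (fun ω' => Pcfg d n (pn d n a ω') ω') ω) / Zn d n a

section Bernoulli

open Finset

variable {ι : Type*} [Fintype ι] {p q : ℝ}

def bernoulliWeight (p : ℝ) (ω : ι → Bool) : ℝ := ∏ e, if ω e then p else 1 - p

theorem bernoulliWeight_nonneg (hp0 : 0 ≤ p) (hp1 : p ≤ 1) (ω : ι → Bool) :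
    0 ≤ bernoulliWeight p ω :=
  prod_nonneg fun e _ => by split_ifs <;> linarith

variable [DecidableEq ι]

theorem sum_bernoulliWeight (p : ℝ) : ∑ ω : ι → Bool, bernoulliWeight p ω = 1 := by
  rw [show (∑ ω : ι → Bool, bernoulliWeight p ω) = ∏ e : ι, ∑ b : Bool, if b then p else 1 - p from
    (Fintype.prod_sum fun (_ : ι) (b : Bool) => if b then p else 1 - p).symm]
  simp

noncomputable def bernoulliProb (p : ℝ) (S : Set (ι → Bool)) : ℝ :=
  ∑ ω, S.indicator (bernoulliWeight p) ω

theorem bernoulliProb_nonneg (hp0 : 0 ≤ p) (hp1 : p ≤ 1) (S : Set (ι → Bool)) :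
    0 ≤ bernoulliProb p S :=
  sum_nonneg fun ω _ => Set.indicator_nonneg (fun ω _ => bernoulliWeight_nonneg hp0 hp1 ω) ω

theorem bernoulliProb_mono (hp0 : 0 ≤ p) (hp1 : p ≤ 1) {S S' : Set (ι → Bool)} (h : S ⊆ S') :
    bernoulliProb p S ≤ bernoulliProb p S' :=
  sum_le_sum fun ω _ =>
    Set.indicator_le_indicator_of_subset h (fun ω => bernoulliWeight_nonneg hp0 hp1 ω) ω

theorem bernoulliProb_cylinder (p : ℝ) (T : Finset ι) (v : ι → Bool) :
    bernoulliProb p {ω | ∀ e ∈ T, ω e = v e} = ∏ e ∈ T, if v e then p else 1 - p := by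
  set g : ι → Bool → ℝ := fun e b => if e ∈ T ∧ b ≠ v e then 0 else if b then p else 1 - p
  have hind : ∀ ω : ι → Bool,
      {ω : ι → Bool | ∀ e ∈ T, ω e = v e}.indicator (bernoulliWeight p) ω = ∏ e, g e (ω e) := by
    intro ω
    by_cases hω : ∀ e ∈ T, ω e = v e
    · rw [Set.indicator_of_mem (show ω ∈ {ω : ι → Bool | ∀ e ∈ T, ω e = v e} from hω)]
      exact prod_congr rfl fun e _ => by simp +contextual [g, hω e]
    · rw [Set.indicator_of_notMem (show ω ∉ {ω : ι → Bool | ∀ e ∈ T, ω e = v e} from hω)]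
      push Not at hω
      obtain ⟨e, heT, he⟩ := hω
      exact (prod_eq_zero (f := fun e => g e (ω e)) (mem_univ e) (if_pos ⟨heT, he⟩)).symm
  have hsum : ∀ e, ∑ b, g e b = if e ∈ T then (if v e then p else 1 - p) else 1 := by
    intro e
    by_cases he : e ∈ T <;> cases hv : v e <;> simp [g, he, hv]
  rw [bernoulliProb, Fintype.sum_congr _ _ hind, ← Fintype.prod_sum, Fintype.prod_congr _ _ hsum,
    Fintype.prod_ite_mem]

@[simp]
theorem bernoulliProb_empty (p : ℝ) : bernoulliProb p (∅ : Set (ι → Bool)) = 0 := by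
  simp [bernoulliProb]

theorem bernoulliProb_univ (p : ℝ) : bernoulliProb p (Set.univ : Set (ι → Bool)) = 1 := by
  simp [bernoulliProb, sum_bernoulliWeight]

theorem bernoulliProb_compl (p : ℝ) (S : Set (ι → Bool)) :
    bernoulliProb p Sᶜ = 1 - bernoulliProb p S := by
  rw [← bernoulliProb_univ (ι := ι) p, bernoulliProb, bernoulliProb, bernoulliProb,
    eq_sub_iff_add_eq, ← sum_add_distrib]
  exact sum_congr rfl fun ω _ => by rw [Set.indicator_compl_add_self_apply, Set.indicator_univ]

theorem bernoulliProb_le_one (hp0 : 0 ≤ p) (hp1 : p ≤ 1) (S : Set (ι → Bool)) :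
    bernoulliProb p S ≤ 1 :=
  bernoulliProb_univ (ι := ι) p ▸ bernoulliProb_mono hp0 hp1 (Set.subset_univ S)

theorem bernoulliProb_mono_of_isUpperSet {S : Set (ι → Bool)} (hS : IsUpperSet S)
    (hp0 : 0 ≤ p) (hpq : p ≤ q) (hq1 : q ≤ 1) : bernoulliProb p S ≤ bernoulliProb q S := by
  have hind : ∀ r ω, S.indicator (bernoulliWeight r) ω = S.indicator 1 ω * bernoulliWeight r ω :=
    fun r ω => by by_cases hω : ω ∈ S <;> simp [hω]
  have hcoord : ∀ x y : Bool, ((if x then p else 1 - p) * if y then q else 1 - q) ≤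
      (if x ⊓ y then p else 1 - p) * if x ⊔ y then q else 1 - q := by
    intro x y
    cases x <;> cases y <;> simp
    nlinarith
  simp only [bernoulliProb, hind]
  refine holley _ _ _ (Set.indicator_nonneg fun _ _ => zero_le_one)
    (bernoulliWeight_nonneg hp0 (hpq.trans hq1)) (bernoulliWeight_nonneg (hp0.trans hpq) hq1)
    (fun ω ω' h => ?_) ?_ fun ω ω' => ?_
  · by_cases hω : ω ∈ S
    · simp [hω, hS h hω]
    · simp [hω, Set.indicator_nonneg]
  · rw [sum_bernoulliWeight, sum_bernoulliWeight]
  · simp only [bernoulliWeight, ← prod_mul_distrib]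
    exact prod_le_prod
      (fun e _ => mul_nonneg (by split_ifs <;> linarith) (by split_ifs <;> linarith))
      fun e _ => hcoord (ω e) (ω' e)

-- Exchanging the `sᶜ`-coordinates of two independent copies preserves the product weight.
theorem bernoulliProb_inter_of_dependsOn {A B : Set (ι → Bool)} {s : Set ι}
    (hA : DependsOn (· ∈ A) s) (hB : DependsOn (· ∈ B) sᶜ) (p : ℝ) :
    bernoulliProb p (A ∩ B) = bernoulliProb p A * bernoulliProb p B := by
  classical
  let σ : (ι → Bool) × (ι → Bool) → (ι → Bool) × (ι → Bool) :=
    fun x => (s.piecewise x.1 x.2, s.piecewise x.2 x.1)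
  have hσ : Function.Involutive σ := fun x => by
    ext e <;> by_cases he : e ∈ s <;> simp [σ, Set.piecewise, he]
  have hw : ∀ ω η : ι → Bool, bernoulliWeight p (s.piecewise ω η) *
      bernoulliWeight p (s.piecewise η ω) = bernoulliWeight p ω * bernoulliWeight p η := by
    intro ω η
    simp only [bernoulliWeight, ← prod_mul_distrib]
    exact prod_congr rfl fun e _ => by by_cases he : e ∈ s <;> simp [Set.piecewise, he, mul_comm]
  have hterm : ∀ x : (ι → Bool) × (ι → Bool),
      (A ∩ B).indicator (bernoulliWeight p) (σ x).1 * bernoulliWeight p (σ x).2 =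
        A.indicator (bernoulliWeight p) x.1 * B.indicator (bernoulliWeight p) x.2 := by
    rintro ⟨ω, η⟩
    have hωA : (s.piecewise ω η ∈ A) = (ω ∈ A) := hA fun e he => by simp [he]
    have hηB : (s.piecewise ω η ∈ B) = (η ∈ B) :=
      hB fun e he => by simp [Set.notMem_of_mem_compl he]
    by_cases h : ω ∈ A ∧ η ∈ B
    · rw [Set.indicator_of_mem (show _ ∈ A ∩ B from ⟨hωA ▸ h.1, hηB ▸ h.2⟩),
        Set.indicator_of_mem h.1, Set.indicator_of_mem h.2]
      exact hw ω η
    · rw [Set.indicator_of_notMem fun hm => h ⟨hωA ▸ hm.1, hηB ▸ hm.2⟩, zero_mul]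
      rcases not_and_or.1 h with h | h <;> simp [Set.indicator_of_notMem h]
  calc bernoulliProb p (A ∩ B)
      = ∑ x : (ι → Bool) × (ι → Bool),
          (A ∩ B).indicator (bernoulliWeight p) x.1 * bernoulliWeight p x.2 := by
        rw [bernoulliProb, Fintype.sum_prod_type, ← sum_mul_sum, sum_bernoulliWeight, mul_one]
    _ = ∑ x : (ι → Bool) × (ι → Bool),
          (A ∩ B).indicator (bernoulliWeight p) (σ x).1 * bernoulliWeight p (σ x).2 :=
        (Equiv.sum_comp hσ.toPerm _).symm
    _ = bernoulliProb p A * bernoulliProb p B := by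
        simp only [hterm, Fintype.sum_prod_type, sum_mul_sum, bernoulliProb]

noncomputable def tunedMass (X : (ι → Bool) → ℕ) (φ : ℕ → ℝ) (S : Set (ι → Bool)) : ℝ :=
  ∑ ω, S.indicator (fun ω => bernoulliWeight (φ (X ω)) ω) ω

variable {X : (ι → Bool) → ℕ} {φ : ℕ → ℝ}

theorem tunedMass_eq_sum {M : ℕ} (hX : ∀ ω, X ω < M) (S : Set (ι → Bool)) :
    tunedMass X φ S = ∑ b ∈ range M, bernoulliProb (φ b) (S ∩ {ω | X ω = b}) := by
  rw [tunedMass, ← sum_fiberwise_of_maps_to (g := X) (t := range M) fun ω _ => mem_range.2 (hX ω)]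
  refine sum_congr rfl fun b _ => ?_
  rw [sum_filter, bernoulliProb]
  refine sum_congr rfl fun ω _ => ?_
  by_cases hb : X ω = b
  · subst hb
    by_cases hS : ω ∈ S <;> simp [hS]
  · simp [hb]

theorem tunedMass_le_mul {M : ℕ} (hX : ∀ ω, X ω < M) {S : Set (ι → Bool)} {c : ℝ}
    (h : ∀ b, bernoulliProb (φ b) (S ∩ {ω | X ω = b}) ≤ c) : tunedMass X φ S ≤ M * c := by
  rw [tunedMass_eq_sum hX]
  calc _ ≤ (range M).card • c := sum_le_card_nsmul _ _ _ fun b _ => h b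
    _ = M * c := by rw [card_range, nsmul_eq_mul]

theorem tunedMass_mono (hφ : ∀ b, 0 ≤ φ b ∧ φ b ≤ 1) {S S' : Set (ι → Bool)} (h : S ⊆ S') :
    tunedMass X φ S ≤ tunedMass X φ S' :=
  sum_le_sum fun ω _ => Set.indicator_le_indicator_of_subset h
    (fun ω => bernoulliWeight_nonneg (hφ _).1 (hφ _).2 ω) ω

theorem bernoulliProb_le_tunedMass (hφ : ∀ b, 0 ≤ φ b ∧ φ b ≤ 1) (S : Set (ι → Bool)) (b : ℕ) :
    bernoulliProb (φ b) (S ∩ {ω | X ω = b}) ≤ tunedMass X φ S := by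
  refine sum_le_sum fun ω _ => ?_
  by_cases h : ω ∈ S ∩ {ω | X ω = b}
  · rw [Set.indicator_of_mem h, Set.indicator_of_mem h.1, h.2]
  · rw [Set.indicator_of_notMem h]
    exact Set.indicator_nonneg (fun ω _ => bernoulliWeight_nonneg (hφ _).1 (hφ _).2 ω) ω

end Bernoulli

section Box

open Finset (Icc card_le_card card_image_le card_map card_product mem_filter mem_image mem_map
  mem_product mem_univ single_le_sum)

variable {d : ℕ}

theorem mem_box {n : ℕ} {x : Fin d → ℤ} :
    x ∈ box d n ↔ ∀ i, -(n : ℤ) / 2 ≤ x i ∧ x i ≤ ((n : ℤ) - 1) / 2 := by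
  simp [box, Fintype.mem_piFinset]

theorem box_mono : Monotone (box d) := fun m n hmn x hx =>
  mem_box.2 fun i => by have := mem_box.1 hx i; omega

theorem pow_le_card_box (n : ℕ) : n ^ d ≤ (box d n).card ∧ (box d n).card ≤ (n + 1) ^ d := by
  have hside : n ≤ (Icc (-(n : ℤ) / 2) (((n : ℤ) - 1) / 2)).card ∧
      (Icc (-(n : ℤ) / 2) (((n : ℤ) - 1) / 2)).card ≤ n + 1 := by
    rw [Int.card_Icc]; omega
  simp only [box, Fintype.card_piFinset, Finset.prod_const, Finset.card_univ, Fintype.card_fin]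
  exact ⟨Nat.pow_le_pow_left hside.1 d, Nat.pow_le_pow_left hside.2 d⟩

theorem mk_mem_boxEdges {n : ℕ} {x y : Fin d → ℤ} (hx : x ∈ box d n) (hy : y ∈ box d n)
    (hxy : ∑ i, |x i - y i| = 1) : s(x, y) ∈ boxEdges d n :=
  mem_image.2 ⟨(x, y), mem_filter.2 ⟨mem_product.2 ⟨hx, hy⟩, hxy⟩, rfl⟩

theorem exists_of_mem_boxEdges {n : ℕ} {e : Sym2 (Fin d → ℤ)} (he : e ∈ boxEdges d n) :
    ∃ x y, x ∈ box d n ∧ y ∈ box d n ∧ ∑ i, |x i - y i| = 1 ∧ s(x, y) = e := by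
  obtain ⟨⟨x, y⟩, hxy, rfl⟩ := mem_image.1 he
  obtain ⟨hxy, h1⟩ := mem_filter.1 hxy
  exact ⟨x, y, (mem_product.1 hxy).1, (mem_product.1 hxy).2, h1, rfl⟩

theorem mem_box_of_mem_boxEdges {n : ℕ} {e : Sym2 (Fin d → ℤ)} (he : e ∈ boxEdges d n)
    {z : Fin d → ℤ} (hz : z ∈ e) : z ∈ box d n := by
  obtain ⟨x, y, hx, hy, -, rfl⟩ := exists_of_mem_boxEdges he
  rcases Sym2.mem_iff.1 hz with rfl | rfl
  exacts [hx, hy]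

-- Every edge meeting `box d ℓ` is `s(z, z + v)` with `z ∈ box d ℓ` and `v ∈ {-1, 0, 1}ᵈ`.
theorem card_le_of_forall_exists_mem_box {n ℓ : ℕ} (T : Finset {e // e ∈ boxEdges d n})
    (hT : ∀ e ∈ T, ∃ z ∈ e.1, z ∈ box d ℓ) : T.card ≤ 3 ^ d * (box d ℓ).card := by
  set cube : Finset (Fin d → ℤ) := Fintype.piFinset fun _ => Icc (-1) 1
  have hcube : cube.card = 3 ^ d := by simp [cube, Fintype.card_piFinset]
  have hsub : T.map (Function.Embedding.subtype _) ⊆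
      (box d ℓ ×ˢ cube).image fun zv => s(zv.1, zv.1 + zv.2) := by
    intro e he
    obtain ⟨e, heT, rfl⟩ := mem_map.1 he
    obtain ⟨z, hze, hz⟩ := hT e heT
    obtain ⟨x, y, -, -, hxy, hxye⟩ := exists_of_mem_boxEdges e.2
    have hunit : ∀ v : Fin d → ℤ, (∀ i, |v i| ≤ 1) → v ∈ cube := fun v hv =>
      Fintype.mem_piFinset.2 fun i => Finset.mem_Icc.2 (abs_le.1 (hv i))
    have hle : ∀ i, |x i - y i| ≤ 1 := fun i =>
      hxy ▸ single_le_sum (f := fun i => |x i - y i|) (fun j _ => abs_nonneg _) (mem_univ i)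
    rw [← hxye] at hze
    refine mem_image.2 ?_
    rcases Sym2.mem_iff.1 hze with rfl | rfl
    · refine ⟨(z, y - z), mem_product.2 ⟨hz, hunit _ fun i => ?_⟩, by simp [hxye]⟩
      simpa [abs_sub_comm] using hle i
    · refine ⟨(z, x - z), mem_product.2 ⟨hz, hunit _ fun i => hle i⟩, ?_⟩
      simp [← hxye, Sym2.eq_swap]
  calc T.card = (T.map (Function.Embedding.subtype _)).card := (card_map _).symm
    _ ≤ (box d ℓ ×ˢ cube).card := (card_le_card hsub).trans card_image_le
    _ = 3 ^ d * (box d ℓ).card := by rw [card_product, hcube, mul_comm]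

end Box

theorem SimpleGraph.Reachable.mem_of_forall_adj {V : Type*} {G : SimpleGraph V} {S : Set V}
    (hS : ∀ u v, u ∈ S → G.Adj u v → v ∈ S) {x y : V} (h : G.Reachable x y) (hx : x ∈ S) :
    y ∈ S := by
  obtain ⟨w⟩ := h
  induction w with
  | nil => exact hx
  | cons huv _ ih => exact ih (hS _ _ hx huv)

section Clusters

variable {d n : ℕ} {ω ω' : Cfg d n}

theorem openBoxGraph_adj {x y : Fin d → ℤ} :
    (openBoxGraph d n ω).Adj x y ↔
      (∃ h : s(x, y) ∈ boxEdges d n, ω ⟨s(x, y), h⟩ = true) ∧ x ≠ y :=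
  SimpleGraph.fromEdgeSet_adj _

theorem openBoxGraph_mono : Monotone (openBoxGraph d n) := fun _ _ h =>
  SimpleGraph.fromEdgeSet_mono fun _ ⟨he, hω⟩ => ⟨he, Bool.eq_true_of_true_le (hω ▸ h ⟨_, he⟩)⟩

theorem boxCluster_subset_box (ω : Cfg d n) {x : Fin d → ℤ} (hx : x ∈ box d n) :
    boxCluster d n ω x ⊆ box d n := fun _ hy =>
  hy.mem_of_forall_adj (fun _ v _ huv =>
    mem_box_of_mem_boxEdges (openBoxGraph_adj.1 huv).1.1 (Sym2.mem_mk_right _ v)) hx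

theorem ncard_boxCluster_le_cmaxB (ω : Cfg d n) {x : Fin d → ℤ} (hx : x ∈ box d n) :
    (boxCluster d n ω x).ncard ≤ cmaxB d n ω :=
  Finset.le_sup (f := fun x => (boxCluster d n ω x).ncard) hx

theorem cmaxB_le_card_box (ω : Cfg d n) : cmaxB d n ω ≤ (box d n).card :=
  Finset.sup_le fun _ hx => (Set.ncard_le_ncard (boxCluster_subset_box ω hx)).trans
    (Set.ncard_coe_finset _).le

theorem cmaxB_mono : Monotone (cmaxB d n) := fun _ ω' h =>
  Finset.sup_mono_fun fun _ hx => Set.ncard_le_ncard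
    (fun _ hy => SimpleGraph.Reachable.mono (openBoxGraph_mono h) hy)
    ((box d n).finite_toSet.subset (boxCluster_subset_box ω' hx))

theorem exists_step_toward {ℓ : ℕ} {x y : Fin d → ℤ} (hx : x ∈ box d ℓ) (hy : y ∈ box d ℓ)
    (hxy : x ≠ y) : ∃ x' ∈ box d ℓ, ∑ i, |x i - x' i| = 1 ∧
      ∑ i, (x' i - y i).natAbs < ∑ i, (x i - y i).natAbs := by
  classical
  obtain ⟨i, hi⟩ := Function.ne_iff.1 hxy
  set x' := Function.update x i (x i + if x i < y i then 1 else -1)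
  have hx'i : x' i = x i + if x i < y i then 1 else -1 := Function.update_self ..
  have hx'j : ∀ j ≠ i, x' j = x j := fun j hj => Function.update_of_ne hj ..
  refine ⟨x', mem_box.2 fun j => ?_, ?_, ?_⟩
  · have := mem_box.1 hx j
    have := mem_box.1 hy j
    by_cases hj : j = i
    · subst hj; rw [hx'i]; split_ifs <;> omega
    · rw [hx'j j hj]; omega
  · rw [Finset.sum_eq_single i (fun j _ hj => by simp [hx'j j hj]) (by simp), hx'i]
    split_ifs <;> simp
  · refine Finset.sum_lt_sum (fun j _ => ?_) ⟨i, Finset.mem_univ i, ?_⟩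
    · by_cases hj : j = i
      · subst hj; rw [hx'i]; split_ifs <;> omega
      · rw [hx'j j hj]
    · rw [hx'i]; split_ifs <;> omega

theorem reachable_of_mem_box {ℓ : ℕ} (hℓn : ℓ ≤ n)
    (hω : ∀ e : {e // e ∈ boxEdges d n}, (∀ z ∈ e.1, z ∈ box d ℓ) → ω e = true)
    {x y : Fin d → ℤ} (hx : x ∈ box d ℓ) (hy : y ∈ box d ℓ) :
    (openBoxGraph d n ω).Reachable x y := by
  induction hk : ∑ i, (x i - y i).natAbs using Nat.strong_induction_on generalizing x with
  | _ k ih =>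
  by_cases hxy : x = y
  · exact hxy ▸ SimpleGraph.Reachable.refl x
  obtain ⟨x', hx', hstep, hlt⟩ := exists_step_toward hx hy hxy
  have he := mk_mem_boxEdges (box_mono hℓn hx) (box_mono hℓn hx') hstep
  have hadj : (openBoxGraph d n ω).Adj x x' := by
    refine openBoxGraph_adj.2 ⟨⟨he, hω ⟨_, he⟩ fun z hz => ?_⟩, fun h => by simp [h] at hstep⟩
    rcases Sym2.mem_iff.1 hz with rfl | rfl
    exacts [hx, hx']
  exact hadj.reachable.trans (ih _ (hk ▸ hlt) hx' rfl)

end Clusters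

section SubBox

variable {d n ℓ : ℕ} {ω ω' : Cfg d n}

def IsolatesBox (d n ℓ : ℕ) (ω : Cfg d n) : Prop :=
  ∀ e : {e // e ∈ boxEdges d n}, (∃ z ∈ e.1, z ∈ box d ℓ) → (ω e = true ↔ ∀ z ∈ e.1, z ∈ box d ℓ)

theorem IsolatesBox.boxCluster_eq (h : IsolatesBox d n ℓ ω) (hℓn : ℓ ≤ n) {x : Fin d → ℤ}
    (hx : x ∈ box d ℓ) : boxCluster d n ω x = box d ℓ := by
  apply subset_antisymm
  · intro y hy
    refine hy.mem_of_forall_adj (fun u v hu huv => ?_) hx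
    obtain ⟨⟨he, hopen⟩, -⟩ := openBoxGraph_adj.1 huv
    exact (h ⟨_, he⟩ ⟨u, Sym2.mem_mk_left u v, hu⟩).1 hopen v (Sym2.mem_mk_right u v)
  · intro y hy
    refine reachable_of_mem_box hℓn (fun e he => ?_) hx hy
    exact (h e ⟨_, Sym2.out_fst_mem e.1, he _ (Sym2.out_fst_mem e.1)⟩).2 he

theorem IsolatesBox.boxCluster_subset (h : IsolatesBox d n ℓ ω)
    (hω' : ∀ e : {e // e ∈ boxEdges d n}, (∀ z ∈ e.1, z ∉ box d ℓ) → ω e = true → ω' e = true)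
    {x : Fin d → ℤ} (hx : x ∉ box d ℓ) : boxCluster d n ω x ⊆ boxCluster d n ω' x := by
  intro y hy
  set S := {y | y ∉ box d ℓ ∧ (openBoxGraph d n ω').Reachable x y}
  suffices hS : ∀ u v, u ∈ S → (openBoxGraph d n ω).Adj u v → v ∈ S from
    (hy.mem_of_forall_adj hS ⟨hx, .refl x⟩).2
  intro u v hu huv
  obtain ⟨⟨he, hopen⟩, hne⟩ := openBoxGraph_adj.1 huv
  have hv : v ∉ box d ℓ := fun hv =>
    hu.1 ((h ⟨_, he⟩ ⟨v, Sym2.mem_mk_right u v, hv⟩).1 hopen u (Sym2.mem_mk_left u v))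
  have hoff : ∀ z ∈ s(u, v), z ∉ box d ℓ := fun z hz => by
    rcases Sym2.mem_iff.1 hz with rfl | rfl
    exacts [hu.1, hv]
  exact ⟨hv, hu.2.trans (openBoxGraph_adj.2 ⟨⟨he, hω' ⟨_, he⟩ hoff hopen⟩, hne⟩).reachable⟩

theorem IsolatesBox.cmaxB_eq (h : IsolatesBox d n ℓ ω) (hℓ : 1 ≤ ℓ) (hℓn : ℓ ≤ n)
    (hω' : ∀ e : {e // e ∈ boxEdges d n}, (∀ z ∈ e.1, z ∉ box d ℓ) → ω e = true → ω' e = true)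
    (hcmax : cmaxB d n ω' ≤ (box d ℓ).card) : cmaxB d n ω = (box d ℓ).card := by
  refine le_antisymm (Finset.sup_le fun x hxn => ?_) ?_
  · by_cases hx : x ∈ box d ℓ
    · rw [h.boxCluster_eq hℓn hx, Set.ncard_coe_finset]
    · exact (Set.ncard_le_ncard (h.boxCluster_subset hω' hx)
        ((box d n).finite_toSet.subset (boxCluster_subset_box ω' hxn))).trans
        ((ncard_boxCluster_le_cmaxB ω' hxn).trans hcmax)
  · obtain ⟨x, hx⟩ : (box d ℓ).Nonempty :=
      Finset.card_pos.1 (lt_of_lt_of_le (pow_pos hℓ d) (pow_le_card_box ℓ).1)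
    calc (box d ℓ).card = (boxCluster d n ω x).ncard := by
          rw [h.boxCluster_eq hℓn hx, Set.ncard_coe_finset]
      _ ≤ cmaxB d n ω := ncard_boxCluster_le_cmaxB ω (box_mono hℓn hx)

theorem dependsOn_isolatesBox :
    DependsOn (IsolatesBox d n ℓ) {e : {e // e ∈ boxEdges d n} | ∃ z ∈ e.1, z ∈ box d ℓ} :=
  fun _ _ h => propext (forall_congr' fun e => imp_congr_right fun he => by rw [h e he])

theorem min_pow_le_PrEvent_isolatesBox {p : ℝ} (hp0 : 0 ≤ p) (hp1 : p ≤ 1) :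
    min p (1 - p) ^ (3 ^ d * (box d ℓ).card) ≤ PrEvent d n p {ω | IsolatesBox d n ℓ ω} := by
  classical
  set T := Finset.univ.filter fun e : {e // e ∈ boxEdges d n} => ∃ z ∈ e.1, z ∈ box d ℓ
  have hA : {ω | IsolatesBox d n ℓ ω} =
      {ω : Cfg d n | ∀ e ∈ T, ω e = decide (∀ z ∈ e.1, z ∈ box d ℓ)} := by
    ext ω
    simp only [IsolatesBox, T, Finset.mem_filter, Finset.mem_univ, true_and]
    exact forall_congr' fun e => imp_congr_right fun _ => by cases ω e <;> simp
  have hmin0 : 0 ≤ min p (1 - p) := le_min hp0 (by linarith)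
  calc min p (1 - p) ^ (3 ^ d * (box d ℓ).card) ≤ min p (1 - p) ^ T.card :=
        pow_le_pow_of_le_one hmin0 ((min_le_left _ _).trans hp1)
          (card_le_of_forall_exists_mem_box T fun e he => (Finset.mem_filter.1 he).2)
    _ = ∏ e ∈ T, min p (1 - p) := (Finset.prod_const _).symm
    _ ≤ ∏ e ∈ T, if decide (∀ z ∈ e.1, z ∈ box d ℓ) then p else 1 - p :=
        Finset.prod_le_prod (fun _ _ => hmin0) fun _ _ => by
          split_ifs
          exacts [min_le_left _ _, min_le_right _ _]
    _ = PrEvent d n p {ω | IsolatesBox d n ℓ ω} := by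
        rw [hA]
        exact (bernoulliProb_cylinder p T _).symm

-- Isolating the sub-box involves only the edges meeting it and `B` only the other edges, so the two
-- events are independent.
theorem min_pow_mul_le_PrEvent_cmaxB_eq {p θ : ℝ} (hℓ : 1 ≤ ℓ) (hℓn : ℓ ≤ n) (hp0 : 0 ≤ p)
    (hp1 : p ≤ 1) (hθ : θ ≤ (box d ℓ).card) :
    min p (1 - p) ^ (3 ^ d * (box d ℓ).card) * (1 - PrEvent d n p {ω | θ ≤ cmaxB d n ω}) ≤
      PrEvent d n p {ω | cmaxB d n ω = (box d ℓ).card} := by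
  classical
  set s := {e : {e // e ∈ boxEdges d n} | ∃ z ∈ e.1, z ∈ box d ℓ}
  set u : Cfg d n := fun e => decide (e ∉ s)
  set B := {ω : Cfg d n | (cmaxB d n (ω ⊓ u) : ℝ) < θ}
  have hAB : {ω | IsolatesBox d n ℓ ω} ∩ B ⊆ {ω | cmaxB d n ω = (box d ℓ).card} := by
    rintro ω ⟨hω, hωB⟩
    refine IsolatesBox.cmaxB_eq hω hℓ hℓn (ω' := ω ⊓ u) (fun e he hωe => ?_) ?_
    · have hes : e ∉ s := fun ⟨z, hz, hzb⟩ => he z hz hzb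
      simp [u, hes, hωe]
    · exact_mod_cast (lt_of_lt_of_le hωB hθ).le
  have hB : DependsOn (· ∈ B) sᶜ := fun ω η h => by
    have : ω ⊓ u = η ⊓ u := funext fun e => by
      by_cases he : e ∈ s
      · simp [u, he]
      · simp [h e he]
    change ((cmaxB d n (ω ⊓ u) : ℝ) < θ) = ((cmaxB d n (η ⊓ u) : ℝ) < θ)
    rw [this]
  have hPB : 1 - PrEvent d n p {ω | θ ≤ cmaxB d n ω} ≤ PrEvent d n p B := by
    have hBc : Bᶜ ⊆ {ω | θ ≤ cmaxB d n ω} := fun ω hω =>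
      (not_lt.1 (show ¬(cmaxB d n (ω ⊓ u) : ℝ) < θ from hω)).trans
        (by exact_mod_cast cmaxB_mono (inf_le_left : ω ⊓ u ≤ ω))
    have := bernoulliProb_compl p Bᶜ
    rw [compl_compl] at this
    change 1 - bernoulliProb p _ ≤ bernoulliProb p B
    linarith [bernoulliProb_mono hp0 hp1 hBc]
  calc _ ≤ PrEvent d n p {ω | IsolatesBox d n ℓ ω} * PrEvent d n p B :=
        mul_le_mul (min_pow_le_PrEvent_isolatesBox hp0 hp1) hPB
          (sub_nonneg.2 (bernoulliProb_le_one hp0 hp1 _)) (bernoulliProb_nonneg hp0 hp1 _)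
    _ = PrEvent d n p ({ω | IsolatesBox d n ℓ ω} ∩ B) :=
        (bernoulliProb_inter_of_dependsOn dependsOn_isolatesBox hB p).symm
    _ ≤ _ := bernoulliProb_mono hp0 hp1 hAB

end SubBox

section Control

variable {d n : ℕ} {a pe : ℝ}

noncomputable def phi (n : ℕ) (a : ℝ) (b : ℕ) : ℝ := Real.exp (-(b : ℝ) / (n : ℝ) ^ a)

theorem phi_mem (n : ℕ) (a : ℝ) (b : ℕ) : 0 ≤ phi n a b ∧ phi n a b ≤ 1 :=
  ⟨(Real.exp_pos _).le, Real.exp_le_one_iff.2 (div_nonpos_of_nonpos_of_nonneg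
    (neg_nonpos.2 b.cast_nonneg) (Real.rpow_nonneg n.cast_nonneg a))⟩

theorem muEvent_eq (S : Set (Cfg d n)) :
    muEvent d n a S = tunedMass (cmaxB d n) (phi n a) S / Zn d n a := rfl

theorem Zn_eq : Zn d n a = tunedMass (cmaxB d n) (phi n a) Set.univ := by
  simp only [Zn, tunedMass, Set.indicator_univ]
  rfl

theorem tunedMass_le_Zn (S : Set (Cfg d n)) : tunedMass (cmaxB d n) (phi n a) S ≤ Zn d n a :=
  Zn_eq ▸ tunedMass_mono (phi_mem n a) (Set.subset_univ S)

theorem phi_le_iff (hn : 0 < n) (hpe0 : 0 < pe) {b : ℕ} :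
    phi n a b ≤ pe ↔ -Real.log pe * (n : ℝ) ^ a ≤ b := by
  rw [phi, ← Real.le_log_iff_exp_le hpe0, neg_div, neg_le, le_div_iff₀ (by positivity)]

theorem isUpperSet_le_cmaxB (θ : ℝ) : IsUpperSet {ω : Cfg d n | θ ≤ cmaxB d n ω} :=
  fun _ _ h hω => (show θ ≤ _ from hω).trans (by exact_mod_cast cmaxB_mono h)

theorem cmaxB_lt_card_box_add_one (ω : Cfg d n) : cmaxB d n ω < (box d n).card + 1 :=
  Nat.lt_succ_of_le (cmaxB_le_card_box ω)

theorem Zn_le_card_box : Zn d n a ≤ (box d n).card + 1 := by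
  rw [Zn_eq]
  simpa using tunedMass_le_mul cmaxB_lt_card_box_add_one (S := Set.univ)
    fun b => bernoulliProb_le_one (phi_mem n a b).1 (phi_mem n a b).2 _

theorem tunedMass_le_card_box_mul (hn : 0 < n) (hpe0 : 0 < pe) (hpe1 : pe ≤ 1) :
    tunedMass (cmaxB d n) (phi n a) {ω | pn d n a ω ≤ pe} ≤
      ((box d n).card + 1) * PrEvent d n pe {ω | -Real.log pe * (n : ℝ) ^ a ≤ cmaxB d n ω} := by
  have hterm : ∀ b, bernoulliProb (phi n a b) ({ω | pn d n a ω ≤ pe} ∩ {ω | cmaxB d n ω = b}) ≤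
      PrEvent d n pe {ω | -Real.log pe * (n : ℝ) ^ a ≤ cmaxB d n ω} := by
    intro b
    by_cases hb : phi n a b ≤ pe
    · refine (bernoulliProb_mono (phi_mem n a b).1 (phi_mem n a b).2 fun ω hω => ?_).trans
        (bernoulliProb_mono_of_isUpperSet (isUpperSet_le_cmaxB _) (phi_mem n a b).1 hb hpe1)
      exact (phi_le_iff (b := cmaxB d n ω) hn hpe0).1 hω.1
    · have : {ω | pn d n a ω ≤ pe} ∩ {ω | cmaxB d n ω = b} = ∅ :=
        Set.eq_empty_of_forall_notMem fun ω hω =>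
          hb (by rw [← show cmaxB d n ω = b from hω.2]; exact hω.1)
      rw [this, bernoulliProb_empty]
      exact bernoulliProb_nonneg hpe0.le hpe1 _
  exact_mod_cast tunedMass_le_mul cmaxB_lt_card_box_add_one hterm

theorem PrEvent_le_tunedMass {b : ℕ} (hb : phi n a b ≤ pe) :
    PrEvent d n (phi n a b) {ω | cmaxB d n ω = b} ≤
      tunedMass (cmaxB d n) (phi n a) {ω | pn d n a ω ≤ pe} :=
  (bernoulliProb_mono (phi_mem n a b).1 (phi_mem n a b).2 fun ω hω =>
    Set.mem_inter (show phi n a (cmaxB d n ω) ≤ pe by rwa [show cmaxB d n ω = b from hω]) hω).trans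
    (bernoulliProb_le_tunedMass (phi_mem n a) _ b)

theorem min_pow_div_two_le_tunedMass {ℓ : ℕ} (hℓ : 1 ≤ ℓ) (hℓn : ℓ ≤ n) (hn : 0 < n)
    (hpe0 : 0 < pe) (hpe1 : pe ≤ 1) (hbox : -Real.log pe * (n : ℝ) ^ a ≤ (box d ℓ).card)
    (hsub : PrEvent d n pe {ω | -Real.log pe * (n : ℝ) ^ a ≤ cmaxB d n ω} ≤ 1 / 2) :
    min (phi n a (box d ℓ).card) (1 - phi n a (box d ℓ).card) ^ (3 ^ d * (box d ℓ).card) / 2 ≤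
      tunedMass (cmaxB d n) (phi n a) {ω | pn d n a ω ≤ pe} := by
  obtain ⟨hq0, hq1⟩ := phi_mem n a (box d ℓ).card
  have hq : phi n a (box d ℓ).card ≤ pe := (phi_le_iff hn hpe0).2 hbox
  have hE := (bernoulliProb_mono_of_isUpperSet (isUpperSet_le_cmaxB (d := d) (n := n)
    (-Real.log pe * (n : ℝ) ^ a)) hq0 hq hpe1).trans hsub
  have hmin : 0 ≤ min (phi n a (box d ℓ).card) (1 - phi n a (box d ℓ).card) :=
    le_min hq0 (by linarith)
  calc _ ≤ _ * (1 - PrEvent d n (phi n a (box d ℓ).card)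
          {ω | -Real.log pe * (n : ℝ) ^ a ≤ cmaxB d n ω}) := by
        rw [div_eq_mul_one_div]
        exact mul_le_mul_of_nonneg_left (by change _ ≤ 1 - bernoulliProb _ _; linarith)
          (pow_nonneg hmin _)
    _ ≤ _ := min_pow_mul_le_PrEvent_cmaxB_eq hℓ hℓn hq0 hq1 hbox
    _ ≤ _ := PrEvent_le_tunedMass hq

end Control

section Asymptotics

open Asymptotics

variable {a : ℝ}

theorem tendsto_natCast_rpow_atTop (ha : 0 < a) :
    Tendsto (fun n : ℕ => (n : ℝ) ^ a) atTop atTop :=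
  (tendsto_rpow_atTop ha).comp tendsto_natCast_atTop_atTop

theorem eventually_le_mul_rpow_of_isLittleO {f : ℕ → ℝ}
    (h : f =o[atTop] fun n : ℕ => (n : ℝ) ^ a) {c : ℝ} (hc : 0 < c) :
    ∀ᶠ n : ℕ in atTop, f n ≤ c * (n : ℝ) ^ a :=
  (h.def hc).mono fun n hn => (le_abs_self _).trans <| by
    simpa [abs_of_nonneg (Real.rpow_nonneg n.cast_nonneg a)] using hn

theorem eventually_mul_rpow_le_pow {d : ℕ} (had : a < d) (C : ℝ) :
    ∀ᶠ n : ℕ in atTop, C * (n : ℝ) ^ a ≤ (n : ℝ) ^ d := by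
  filter_upwards [(tendsto_natCast_rpow_atTop (sub_pos.2 had)).eventually_ge_atTop C,
    eventually_gt_atTop 0] with n hC hn
  have hn' : (0 : ℝ) < n := by exact_mod_cast hn
  calc C * (n : ℝ) ^ a ≤ (n : ℝ) ^ ((d : ℝ) - a) * (n : ℝ) ^ a :=
        mul_le_mul_of_nonneg_right hC (by positivity)
    _ = (n : ℝ) ^ d := by rw [← Real.rpow_add hn', sub_add_cancel, Real.rpow_natCast]

theorem isLittleO_log_card_box (d : ℕ) (ha : 0 < a) :
    (fun n : ℕ => Real.log ((box d n).card + 1)) =o[atTop] fun n : ℕ => (n : ℝ) ^ a := by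
  refine IsBigO.trans_isLittleO (g := fun n : ℕ => Real.log n) ?_
    ((isLittleO_log_rpow_atTop ha).comp_tendsto tendsto_natCast_atTop_atTop)
  refine IsBigO.of_bound (2 * (d + 1)) ((eventually_ge_atTop 2).mono fun n hn => ?_)
  have hcard : (box d n).card + 1 ≤ n ^ (2 * (d + 1)) :=
    calc (box d n).card + 1 ≤ (n + 1) ^ d + 1 := Nat.succ_le_succ (pow_le_card_box n).2
      _ ≤ (n + 1) ^ (d + 1) := by
          rw [pow_succ]; nlinarith [Nat.one_le_pow d (n + 1) (by omega)]
      _ ≤ (n ^ 2) ^ (d + 1) := Nat.pow_le_pow_left (by nlinarith) _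
      _ = n ^ (2 * (d + 1)) := by rw [← pow_mul]
  have hn1 : (1 : ℝ) ≤ n := by exact_mod_cast (by omega : 1 ≤ n)
  rw [Real.norm_of_nonneg (Real.log_nonneg (le_add_of_nonneg_left (Nat.cast_nonneg _))),
    Real.norm_of_nonneg (Real.log_nonneg hn1)]
  calc Real.log ((box d n).card + 1) ≤ Real.log ((n : ℝ) ^ (2 * (d + 1))) :=
        Real.log_le_log (by positivity) (by exact_mod_cast hcard)
    _ = 2 * (d + 1) * Real.log n := by rw [Real.log_pow]; push_cast; ring

theorem isLittleO_log_mul_rpow {d : ℕ} (ha : 0 < a) (hd : d ≠ 0) :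
    (fun n : ℕ => Real.log n * (n : ℝ) ^ (a * ((d : ℝ) - 1) / d)) =o[atTop]
      fun n : ℕ => (n : ℝ) ^ a := by
  have hd' : (0 : ℝ) < d := by exact_mod_cast Nat.pos_of_ne_zero hd
  refine (((isLittleO_log_rpow_atTop (div_pos ha hd')).comp_tendsto
    tendsto_natCast_atTop_atTop).mul_isBigO (isBigO_refl _ _)).congr_right fun n => ?_
  rw [Function.comp_apply, ← Real.rpow_add' n.cast_nonneg (by field_simp; ring_nf; positivity)]
  congr 1
  field_simp
  ring

theorem exists_card_box_between {d : ℕ} (hd : d ≠ 0) {y : ℝ} (hy : 1 ≤ y) :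
    ∃ ℓ : ℕ, 1 ≤ ℓ ∧ y ≤ (box d ℓ).card ∧ ((ℓ : ℝ) + 1) ^ d ≤ 3 ^ d * y := by
  set x := y ^ ((d : ℝ)⁻¹)
  have hx1 : 1 ≤ x := Real.one_le_rpow hy (by positivity)
  have hxd : x ^ d = y := Real.rpow_inv_natCast_pow (by linarith) hd
  refine ⟨⌈x⌉₊, Nat.one_le_ceil_iff.2 (by linarith), ?_, ?_⟩
  · calc y = x ^ d := hxd.symm
      _ ≤ (⌈x⌉₊ : ℝ) ^ d := pow_le_pow_left₀ (by linarith) (Nat.le_ceil x) d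
      _ ≤ (box d ⌈x⌉₊).card := by exact_mod_cast (pow_le_card_box _).1
  · calc ((⌈x⌉₊ : ℝ) + 1) ^ d ≤ (3 * x) ^ d :=
          pow_le_pow_left₀ (by positivity)
            (by linarith [Nat.ceil_lt_add_one (by linarith : 0 ≤ x)]) d
      _ = 3 ^ d * y := by rw [mul_pow, hxd]

end Asymptotics

section LeftTail

variable {d n : ℕ} {a pe : ℝ}

-- Each of the `≤ 3ᵈ |Λ(ℓ)| ≤ 9ᵈ (-ln pe) nᵃ` edges meeting the sub-box is fixed at a cost of at
-- least `min q (1 - q) ≥ min (exp (-3ᵈ (-ln pe))) (1 - pe)`, where `q = φ_n(|Λ(ℓ)|)`.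
noncomputable def subBoxRate (d : ℕ) (pe : ℝ) : ℝ :=
  9 ^ d * -Real.log pe * -Real.log (min (Real.exp (-(3 ^ d * -Real.log pe))) (1 - pe))

theorem exp_neg_subBoxRate_mul_le (hn : 0 < n) (hpe0 : 0 < pe) (hpe1 : pe < 1) {b : ℕ}
    (hlow : -Real.log pe * (n : ℝ) ^ a ≤ b) (hup : (b : ℝ) ≤ 3 ^ d * (-Real.log pe * (n : ℝ) ^ a)) :
    Real.exp (-(subBoxRate d pe * (n : ℝ) ^ a)) ≤
      min (phi n a b) (1 - phi n a b) ^ (3 ^ d * b) := by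
  set c0 := min (Real.exp (-(3 ^ d * -Real.log pe))) (1 - pe)
  have hc0 : 0 < c0 := lt_min (Real.exp_pos _) (by linarith)
  have hq : c0 ≤ min (phi n a b) (1 - phi n a b) := by
    refine min_le_min (Real.exp_le_exp.2 ?_) (by linarith [(phi_le_iff hn hpe0).2 hlow])
    rw [neg_div, neg_le_neg_iff, div_le_iff₀ (by positivity)]
    linarith
  have hlogc0 : 0 ≤ -Real.log c0 :=
    neg_nonneg.2 (Real.log_nonpos hc0.le ((min_le_right _ _).trans (by linarith)))
  have hexp : -(subBoxRate d pe * (n : ℝ) ^ a) ≤ (3 ^ d * b : ℕ) * Real.log c0 := by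
    have h9 : (9 : ℝ) ^ d = 3 ^ d * 3 ^ d := by rw [← mul_pow]; norm_num
    have := mul_le_mul_of_nonneg_right
      (mul_le_mul_of_nonneg_left hup (by positivity : (0 : ℝ) ≤ 3 ^ d)) hlogc0
    simp only [subBoxRate, h9]
    push_cast
    nlinarith
  calc Real.exp (-(subBoxRate d pe * (n : ℝ) ^ a)) ≤ c0 ^ (3 ^ d * b) := by
        rw [← Real.exp_log hc0, ← Real.exp_nat_mul]
        exact Real.exp_le_exp.2 hexp
    _ ≤ _ := pow_le_pow_left₀ hc0.le hq _

theorem exp_div_two_le_tunedMass (hd : d ≠ 0) (hn : 0 < n) (hpe0 : 0 < pe) (hpe1 : pe < 1)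
    (hy : 1 ≤ -Real.log pe * (n : ℝ) ^ a)
    (hyn : 3 ^ d * (-Real.log pe * (n : ℝ) ^ a) ≤ (n : ℝ) ^ d)
    (hsub : PrEvent d n pe {ω | -Real.log pe * (n : ℝ) ^ a ≤ cmaxB d n ω} ≤ 1 / 2) :
    Real.exp (-(subBoxRate d pe * (n : ℝ) ^ a)) / 2 ≤
      tunedMass (cmaxB d n) (phi n a) {ω | pn d n a ω ≤ pe} := by
  obtain ⟨ℓ, hℓ, hlow, hup⟩ := exists_card_box_between hd hy
  have hℓn : ℓ ≤ n := by
    have := (pow_le_pow_iff_left₀ (by positivity) (by positivity) hd).1 (hup.trans hyn)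
    exact_mod_cast (by linarith : (ℓ : ℝ) ≤ n)
  have hbox : ((box d ℓ).card : ℝ) ≤ 3 ^ d * (-Real.log pe * (n : ℝ) ^ a) :=
    le_trans (by exact_mod_cast (pow_le_card_box ℓ).2) hup
  exact (div_le_div_of_nonneg_right (exp_neg_subBoxRate_mul_le hn hpe0 hpe1 hlow hbox)
    zero_le_two).trans (min_pow_div_two_le_tunedMass hℓ hℓn hn hpe0 hpe1.le hlow hsub)

theorem eventually_exp_div_two_le_tunedMass (ha : 0 < a) (had : a < d) (hpe0 : 0 < pe)
    (hpe1 : pe < 1) {L' : ℝ} (hL' : 0 < L')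
    (hsub : ∀ᶠ n : ℕ in atTop, PrEvent d n pe {ω | -Real.log pe * (n : ℝ) ^ a ≤ cmaxB d n ω}
      ≤ Real.exp (-L' * (n : ℝ) ^ a)) :
    ∀ᶠ n : ℕ in atTop, Real.exp (-(subBoxRate d pe * (n : ℝ) ^ a)) / 2 ≤
      tunedMass (cmaxB d n) (phi n a) {ω | pn d n a ω ≤ pe} := by
  have hd : d ≠ 0 := (Nat.cast_pos.1 (ha.trans had)).ne'
  have hc : 0 < -Real.log pe := neg_pos.2 (Real.log_neg hpe0 hpe1)
  have ht := tendsto_natCast_rpow_atTop ha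
  filter_upwards [hsub, eventually_gt_atTop 0, ht.eventually_ge_atTop (1 / -Real.log pe),
    ht.eventually_ge_atTop (Real.log 2 / L'), eventually_mul_rpow_le_pow had (3 ^ d * -Real.log pe)]
    with n hsubn hn hy h2 hyn
  refine exp_div_two_le_tunedMass hd hn hpe0 hpe1 ?_ (by linarith) (hsubn.trans ?_)
  · rw [div_le_iff₀ hc] at hy
    linarith
  · rw [div_le_iff₀ hL'] at h2
    calc Real.exp (-L' * (n : ℝ) ^ a) ≤ Real.exp (-Real.log 2) := Real.exp_le_exp.2 (by linarith)
      _ = 1 / 2 := by rw [Real.exp_neg, Real.exp_log two_pos, one_div]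

theorem eventually_log_muEvent_le (ha : 0 < a) (had : a < d) (hpe0 : 0 < pe) (hpe1 : pe ≤ 1)
    {L : ℝ} (hZ : ∀ᶠ n : ℕ in atTop,
      -L * Real.log n * (n : ℝ) ^ (a * ((d : ℝ) - 1) / d) ≤ Real.log (Zn d n a))
    {L' : ℝ} (hL' : 0 < L')
    (hsub : ∀ᶠ n : ℕ in atTop, PrEvent d n pe {ω | -Real.log pe * (n : ℝ) ^ a ≤ cmaxB d n ω}
      ≤ Real.exp (-L' * (n : ℝ) ^ a))
    (hpos : ∀ᶠ n : ℕ in atTop, 0 < tunedMass (cmaxB d n) (phi n a) {ω | pn d n a ω ≤ pe}) :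
    ∀ᶠ n : ℕ in atTop,
      Real.log (muEvent d n a {ω | pn d n a ω ≤ pe}) ≤ -(L' / 2) * (n : ℝ) ^ a := by
  have hd : d ≠ 0 := (Nat.cast_pos.1 (ha.trans had)).ne'
  filter_upwards [hZ, hsub, hpos, eventually_gt_atTop 0,
    eventually_le_mul_rpow_of_isLittleO (isLittleO_log_card_box d ha) (by positivity : 0 < L' / 4),
    eventually_le_mul_rpow_of_isLittleO ((isLittleO_log_mul_rpow ha hd).const_mul_left L)
      (by positivity : 0 < L' / 4)] with n hZn hsubn hN hn hM hLZ
  have hZ0 : 0 < Zn d n a := hN.trans_le (tunedMass_le_Zn _)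
  have hlogN : Real.log (tunedMass (cmaxB d n) (phi n a) {ω | pn d n a ω ≤ pe}) ≤
      Real.log ((box d n).card + 1) + -L' * (n : ℝ) ^ a :=
    calc _ ≤ Real.log (((box d n).card + 1) * Real.exp (-L' * (n : ℝ) ^ a)) :=
          Real.log_le_log hN ((tunedMass_le_card_box_mul hn hpe0 hpe1).trans
            (mul_le_mul_of_nonneg_left hsubn (by positivity)))
      _ = _ := by rw [Real.log_mul (by positivity) (Real.exp_pos _).ne', Real.log_exp]
  rw [muEvent_eq, Real.log_div hN.ne' hZ0.ne']
  have : -L * Real.log n * (n : ℝ) ^ (a * ((d : ℝ) - 1) / d) =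
      -(L * (Real.log n * (n : ℝ) ^ (a * ((d : ℝ) - 1) / d))) := by ring
  linarith

theorem eventually_neg_le_log_muEvent (ha : 0 < a) {K : ℝ}
    (hK : ∀ᶠ n : ℕ in atTop, Real.exp (-(K * (n : ℝ) ^ a)) / 2 ≤
      tunedMass (cmaxB d n) (phi n a) {ω | pn d n a ω ≤ pe}) :
    ∀ᶠ n : ℕ in atTop,
      -(K + 1) * (n : ℝ) ^ a ≤ Real.log (muEvent d n a {ω | pn d n a ω ≤ pe}) := by
  filter_upwards [hK,
    eventually_le_mul_rpow_of_isLittleO (isLittleO_log_card_box d ha) one_half_pos,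
    (tendsto_natCast_rpow_atTop ha).eventually_ge_atTop (2 * Real.log 2)] with n hKn hM h2
  have hN := (div_pos (Real.exp_pos _) two_pos).trans_le hKn
  have hZ0 : 0 < Zn d n a := hN.trans_le (tunedMass_le_Zn _)
  have hlogN := Real.log_le_log (div_pos (Real.exp_pos _) two_pos) hKn
  have hlogZ := Real.log_le_log hZ0 Zn_le_card_box
  rw [Real.log_div (Real.exp_pos _).ne' two_ne_zero, Real.log_exp] at hlogN
  rw [muEvent_eq, Real.log_div hN.ne' hZ0.ne']
  linarith

end LeftTail

theorem limsup_lt_zero_of_eventually_le {u t : ℕ → ℝ} {c C : ℝ} (hc : 0 < c)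
    (ht : ∀ᶠ n in atTop, 0 < t n) (hup : ∀ᶠ n in atTop, u n ≤ -c * t n)
    (hlow : ∀ᶠ n in atTop, -C * t n ≤ u n) : limsup (fun n => 1 / t n * u n) atTop < 0 := by
  have hup' : ∀ᶠ n in atTop, 1 / t n * u n ≤ -c := by
    filter_upwards [ht, hup] with n htn hn
    rw [one_div_mul_eq_div, div_le_iff₀ htn]
    exact hn
  have hlow' : ∀ᶠ n in atTop, -C ≤ 1 / t n * u n := by
    filter_upwards [ht, hlow] with n htn hn
    rw [one_div_mul_eq_div, le_div_iff₀ htn]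
    exact hn
  exact (limsup_le_of_le (isCoboundedUnder_le_of_eventually_le atTop hlow') hup').trans_lt
    (neg_neg_of_pos hc)

theorem mu_left_tail_general (d : ℕ) (a : ℝ) (ha0 : 0 < a) (had : a < d)
    (pc : ℝ) (hpc1 : pc < 1)
    (ε : ℝ) (hε0 : 0 < ε) (hε : ε < pc)
    (L : ℝ)
    (hZ : ∀ᶠ n : ℕ in atTop,
      -L * Real.log n * (n : ℝ) ^ (a * ((d : ℝ) - 1) / d) ≤ Real.log (Zn d n a))
    (L' : ℝ) (hL' : 0 < L')
    (hsub : ∀ᶠ n : ℕ in atTop,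
      PrEvent d n (pc - ε) {ω | (-Real.log (pc - ε)) * (n : ℝ) ^ a ≤ (cmaxB d n ω : ℝ)}
        ≤ Real.exp (-L' * (n : ℝ) ^ a)) :
    limsup (fun n : ℕ =>
        (1 / (n : ℝ) ^ a) * Real.log (muEvent d n a {ω | pn d n a ω ≤ pc - ε}))
      atTop < 0 := by
  have hpe0 : 0 < pc - ε := sub_pos.2 hε
  have hpe1 : pc - ε < 1 := by linarith
  have hK := eventually_exp_div_two_le_tunedMass ha0 had hpe0 hpe1 hL' hsub
  have hpos := hK.mono fun n h => (div_pos (Real.exp_pos _) two_pos).trans_le h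
  exact limsup_lt_zero_of_eventually_le (half_pos hL')
    ((eventually_gt_atTop 0).mono fun n hn => by positivity)
    (eventually_log_muEvent_le ha0 had hpe0 hpe1.le hZ hL' hsub hpos)
    (eventually_neg_le_log_muEvent ha0 hK)

/-- Given a lower bound `ln Z_n ≥ -L (ln n) n^(a(d-1)/d)` and subcritical exponential
decay `P_{p_c-ε}(|C_max| ≥ (-ln(p_c-ε)) n^a) ≤ e^(-L' n^a)`, the left tail of `p_n`
under `μ_n` satisfies `limsup (1/n^a) ln μ_n(p_n ≤ p_c - ε) < 0`. -/
theorem mu_left_tail (d : ℕ) (hd : 2 ≤ d) (a : ℝ) (ha0 : 0 < a) (had : a < d)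
    (pc : ℝ) (hpc0 : 0 < pc) (hpc1 : pc < 1)
    (ε : ℝ) (hε0 : 0 < ε) (hε : ε < pc)
    (L : ℝ) (hL : 0 < L)
    (hZ : ∀ᶠ n : ℕ in atTop,
      -L * Real.log n * (n : ℝ) ^ (a * ((d : ℝ) - 1) / d) ≤ Real.log (Zn d n a))
    (L' : ℝ) (hL' : 0 < L')
    (hsub : ∀ᶠ n : ℕ in atTop,
      PrEvent d n (pc - ε) {ω | (-Real.log (pc - ε)) * (n : ℝ) ^ a ≤ (cmaxB d n ω : ℝ)}
        ≤ Real.exp (-L' * (n : ℝ) ^ a)) :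
    limsup (fun n : ℕ =>
        (1 / (n : ℝ) ^ a) * Real.log (muEvent d n a {ω | pn d n a ω ≤ pc - ε}))
      atTop < 0 :=
  mu_left_tail_general d a ha0 had pc hpc1 ε hε0 hε L hZ L' hL' hsub
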